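/- In the setting of the suboptimality inequality suppose additionally that Π, X, γ, r, μ₀, λ are fixed and that for each n ∈ ℕ we have, for every π ∈ Π, kernels κ_π (independent of n) and η_{π,n}, and nonnegative bounded measurable uncertainty functions u_{π,n} with |∫ V_{κ_π} dη_{π,n}(x,·) − ∫ V_{κ_π} dκ_π(x,·)| ≤ u_{π,n}(x) for all x, and that π̂_n maximizes the penalized objective J̃_n(π) := Σ_t γ^t ∫ (r − λ·u_{π,n}) dμ^{η_{π,n}}_t over Π. Let π⋆ ∈ Π satisfy J(κ_{π⋆}) ≥ J(κ_π) for all π ∈ Π. If ε_n := Σ_t γ^t ∫ u_{π⋆,n} dμ^{η_{π⋆,n}}_t → 0 as n → ∞, then J(κ_{π̂_n}) → J(κ_{π⋆}). -/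

import Mathlib

/-!
Simulation lemma: telescoping the Bellman equation `V_κ = r + γ κ V_κ` along the `η`-chain,
`∫ V_κ dμ^η_t - γ ∫ V_κ dμ^η_{t+1} = ∫ r dμ^η_t + γ ∫ (κ V_κ - η V_κ) dμ^η_t`, gives
`|J(κ) - Σ_t γ^t ∫ r dμ^η_t| ≤ γ Σ_t γ^t ∫ u dμ^η_t`.
Since `λ ≥ γ`, the penalized objective `J̃_n(π)` is therefore a pessimistic estimate of `J(κ_π)`,
while at `π⋆` it falls short of `J(κ_{π⋆})` by at most `(γ + λ) ε_n`. Hence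
`J(κ_{π⋆}) - (γ + λ) ε_n ≤ J̃_n(π⋆) ≤ J̃_n(π̂_n) ≤ J(κ_{π̂_n}) ≤ J(κ_{π⋆})`.
-/

open MeasureTheory ProbabilityTheory Filter

/-- The `n`-step transition kernel of a time-homogeneous Markov chain with one-step
kernel `κ`; under the Ionescu–Tulcea trajectory measure `P^κ_x`, the law of `X n` is
`kIter κ n x`. -/
noncomputable def kIter {X : Type*} [MeasurableSpace X] (κ : Kernel X X) : ℕ → Kernel X X
  | 0 => Kernel.id
  | n + 1 => κ ∘ₖ kIter κ n

/-- The discounted value `V_κ(x) = Σ_{n≥0} γ^n E_{P^κ_x}[r(X_n)]`. -/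
noncomputable def discVal {X : Type*} [MeasurableSpace X] (κ : Kernel X X) (γ : ℝ)
    (r : X → ℝ) (x : X) : ℝ :=
  ∑' n : ℕ, γ ^ n * ∫ y, r y ∂(kIter κ n x)

/-- The objective `J(κ) = ∫ V_κ dμ₀`. -/
noncomputable def discJ {X : Type*} [MeasurableSpace X] (κ : Kernel X X) (γ : ℝ)
    (r : X → ℝ) (μ₀ : Measure X) : ℝ :=
  ∫ x, discVal κ γ r x ∂μ₀

/-- The law `μ^η_t` of `X_t` under the `η`-chain started from `μ₀`. -/
noncomputable def marginal {X : Type*} [MeasurableSpace X] (η : Kernel X X)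
    (μ₀ : Measure X) (t : ℕ) : Measure X :=
  μ₀.bind (kIter η t)

section Integrals

variable {α β : Type*} [MeasurableSpace α] [MeasurableSpace β] {μ : Measure α} {f : α → ℝ}
  {C : ℝ}

lemma integrable_of_abs_le [IsFiniteMeasure μ] (hf : Measurable f) (hC : ∀ x, |f x| ≤ C) :
    Integrable f μ :=
  .of_bound hf.aestronglyMeasurable C
    (ae_of_all _ fun x => (Real.norm_eq_abs (f x)).trans_le (hC x))

lemma abs_integral_le_of_abs_le [IsProbabilityMeasure μ] (hC : ∀ x, |f x| ≤ C) :
    |∫ x, f x ∂μ| ≤ C := by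
  simpa using norm_integral_le_of_norm_le_const (μ := μ)
    (ae_of_all _ fun x => (Real.norm_eq_abs (f x)).trans_le (hC x))

lemma MeasureTheory.Measure.integral_bind [SFinite μ] {κ : Kernel α β} [IsSFiniteKernel κ]
    {g : β → ℝ} (hg : Integrable g (κ ∘ₘ μ)) :
    ∫ y, g y ∂(κ ∘ₘ μ) = ∫ x, ∫ y, g y ∂κ x ∂μ := by
  rw [Measure.comp_eq_comp_const_apply] at hg ⊢
  rw [Kernel.integral_comp hg]
  simp

@[fun_prop]
lemma measurable_integral_kernel {κ : Kernel α β} {g : β → ℝ} (hg : Measurable g) :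
    Measurable fun x => ∫ y, g y ∂κ x :=
  hg.stronglyMeasurable.integral_kernel.measurable

lemma measurable_tsum_of_summable {g : ℕ → α → ℝ} (hg : ∀ n, Measurable (g n))
    (hs : ∀ x, Summable fun n => g n x) : Measurable fun x => ∑' n, g n x :=
  measurable_of_tendsto_metrizable (fun _ => Finset.measurable_sum _ fun i _ => hg i)
    (tendsto_pi_nhds.2 fun x => (hs x).hasSum.tendsto_sum_nat)

lemma hasSum_integral_of_abs_le [IsProbabilityMeasure μ] {F : ℕ → α → ℝ} {c : ℕ → ℝ}
    (hF : ∀ n, Measurable (F n)) (hc : Summable c) (hFc : ∀ n x, |F n x| ≤ c n) :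
    HasSum (fun n => ∫ x, F n x ∂μ) (∫ x, ∑' n, F n x ∂μ) :=
  hasSum_integral_of_summable_integral_norm (fun n => integrable_of_abs_le (hF n) (hFc n))
    (hc.of_norm_bounded fun n => abs_integral_le_of_abs_le fun x => by
      rw [abs_norm, Real.norm_eq_abs]
      exact hFc n x)

end Integrals

lemma summable_geometric_mul_of_abs_le {γ : ℝ} (hγ0 : 0 ≤ γ) (hγ1 : γ < 1) {a : ℕ → ℝ}
    {C : ℝ} (ha : ∀ n, |a n| ≤ C) : Summable fun n => γ ^ n * a n :=
  .of_norm_bounded ((summable_geometric_of_lt_one hγ0 hγ1).mul_right C) fun n => by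
    rw [norm_mul, norm_pow, Real.norm_of_nonneg hγ0]
    exact mul_le_mul_of_nonneg_left (ha n) (pow_nonneg hγ0 n)

lemma hasSum_geometric_mul_sub_mul_succ {γ : ℝ} (hγ0 : 0 ≤ γ) (hγ1 : γ < 1) {b : ℕ → ℝ}
    {C : ℝ} (hb : ∀ n, |b n| ≤ C) :
    HasSum (fun n => γ ^ n * (b n - γ * b (n + 1))) (b 0) := by
  obtain ⟨S, hS⟩ := summable_geometric_mul_of_abs_le hγ0 hγ1 hb
  have hshift : HasSum (fun n => γ ^ (n + 1) * b (n + 1)) (S - b 0) := by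
    simpa using (hasSum_nat_add_iff' 1).2 hS
  have hterm : (fun n => γ ^ n * (b n - γ * b (n + 1)))
      = fun n => γ ^ n * b n - γ ^ (n + 1) * b (n + 1) := by
    funext n
    ring
  rw [hterm, ← sub_sub_cancel S (b 0)]
  exact hS.sub hshift

section MarkovChain

variable {X : Type*} [MeasurableSpace X]

lemma kIter_eq_pow (κ : Kernel X X) (n : ℕ) : kIter κ n = κ ^ n := by
  induction n with
  | zero => rfl
  | succ n ih => rw [pow_succ', ← ih]; rfl

instance (κ : Kernel X X) [IsMarkovKernel κ] (n : ℕ) : IsMarkovKernel (kIter κ n) := by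
  induction n with
  | zero => exact inferInstanceAs (IsMarkovKernel Kernel.id)
  | succ n ih => exact inferInstanceAs (IsMarkovKernel (κ ∘ₖ kIter κ n))

lemma kIter_succ_apply (κ : Kernel X X) (n : ℕ) (x : X) :
    kIter κ (n + 1) x = kIter κ n ∘ₘ κ x := by
  rw [kIter_eq_pow, kIter_eq_pow, pow_succ]
  exact Kernel.comp_apply _ _ x

lemma marginal_zero (η : Kernel X X) (μ₀ : Measure X) : marginal η μ₀ 0 = μ₀ :=
  Measure.id_comp

lemma marginal_succ (η : Kernel X X) (μ₀ : Measure X) (t : ℕ) :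
    marginal η μ₀ (t + 1) = η ∘ₘ marginal η μ₀ t :=
  Measure.comp_assoc.symm

instance (η : Kernel X X) [IsMarkovKernel η] (μ₀ : Measure X) [IsProbabilityMeasure μ₀]
    (t : ℕ) : IsProbabilityMeasure (marginal η μ₀ t) := by
  unfold marginal
  infer_instance

end MarkovChain

section DiscountedValue

variable {X : Type*} [MeasurableSpace X] {κ : Kernel X X} [IsMarkovKernel κ] {γ : ℝ}
  {r : X → ℝ} {C : ℝ}

lemma abs_pow_mul_integral_kIter_le (hγ0 : 0 ≤ γ) (hC : ∀ x, |r x| ≤ C) (n : ℕ) (x : X) :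
    |γ ^ n * ∫ y, r y ∂kIter κ n x| ≤ γ ^ n * C := by
  rw [abs_mul, abs_of_nonneg (pow_nonneg hγ0 n)]
  exact mul_le_mul_of_nonneg_left (abs_integral_le_of_abs_le hC) (pow_nonneg hγ0 n)

lemma hasSum_discVal (hγ0 : 0 ≤ γ) (hγ1 : γ < 1) (hC : ∀ x, |r x| ≤ C) (x : X) :
    HasSum (fun n => γ ^ n * ∫ y, r y ∂kIter κ n x) (discVal κ γ r x) :=
  (summable_geometric_mul_of_abs_le hγ0 hγ1 fun _ => abs_integral_le_of_abs_le hC).hasSum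

lemma abs_discVal_le (hγ0 : 0 ≤ γ) (hγ1 : γ < 1) (hC : ∀ x, |r x| ≤ C) (x : X) :
    |discVal κ γ r x| ≤ C * (1 - γ)⁻¹ :=
  (hasSum_discVal hγ0 hγ1 hC x).norm_le_of_bounded
    ((hasSum_geometric_of_lt_one hγ0 hγ1).mul_left C) fun n => by
      simpa only [Real.norm_eq_abs, mul_comm C] using abs_pow_mul_integral_kIter_le hγ0 hC n x

lemma measurable_discVal (hγ0 : 0 ≤ γ) (hγ1 : γ < 1) (hr : Measurable r)
    (hC : ∀ x, |r x| ≤ C) : Measurable (discVal κ γ r) :=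
  measurable_tsum_of_summable (fun n => by fun_prop)
    fun x => (hasSum_discVal hγ0 hγ1 hC x).summable

lemma discVal_eq_add_integral (hγ0 : 0 ≤ γ) (hγ1 : γ < 1) (hr : Measurable r)
    (hC : ∀ x, |r x| ≤ C) (x : X) :
    discVal κ γ r x = r x + γ * ∫ y, discVal κ γ r y ∂κ x := by
  have hshift : ∀ n, γ ^ (n + 1) * ∫ y, r y ∂kIter κ (n + 1) x
      = γ * ∫ y, γ ^ n * ∫ z, r z ∂kIter κ n y ∂κ x := fun n => by
    rw [kIter_succ_apply, Measure.integral_bind (integrable_of_abs_le hr hC),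
      integral_const_mul, pow_succ]
    ring
  have hswap := hasSum_integral_of_abs_le (μ := κ x) (fun n => by fun_prop)
    ((summable_geometric_of_lt_one hγ0 hγ1).mul_right C)
    (abs_pow_mul_integral_kIter_le (κ := κ) hγ0 hC)
  rw [discVal, (hasSum_discVal hγ0 hγ1 hC x).summable.tsum_eq_zero_add, tsum_congr hshift,
    tsum_mul_left, hswap.tsum_eq]
  simp [kIter, Kernel.id_apply, integral_dirac' r x hr.stronglyMeasurable, discVal]

end DiscountedValue

/-- The penalized objective `J̃` and the uncertainty mass `ε` are `discSum γ (marginal η μ₀)`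
of `r - λ u` and of `u`. -/
noncomputable def discSum {X : Type*} [MeasurableSpace X] (γ : ℝ) (ν : ℕ → Measure X)
    (f : X → ℝ) : ℝ :=
  ∑' t, γ ^ t * ∫ x, f x ∂ν t

section DiscountedSum

variable {X : Type*} [MeasurableSpace X] {ν : ℕ → Measure X} {γ : ℝ} {f g : X → ℝ} {C D : ℝ}

lemma hasSum_discSum [∀ t, IsProbabilityMeasure (ν t)] (hγ0 : 0 ≤ γ) (hγ1 : γ < 1)
    (hC : ∀ x, |f x| ≤ C) :
    HasSum (fun t => γ ^ t * ∫ x, f x ∂ν t) (discSum γ ν f) :=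
  (summable_geometric_mul_of_abs_le hγ0 hγ1 fun _ => abs_integral_le_of_abs_le hC).hasSum

lemma discSum_nonneg (hγ0 : 0 ≤ γ) (hf : ∀ x, 0 ≤ f x) : 0 ≤ discSum γ ν f :=
  tsum_nonneg fun t => mul_nonneg (pow_nonneg hγ0 t) (integral_nonneg hf)

lemma discSum_sub_const_mul [∀ t, IsProbabilityMeasure (ν t)] (hγ0 : 0 ≤ γ) (hγ1 : γ < 1)
    (hf : Measurable f) (hC : ∀ x, |f x| ≤ C) (hg : Measurable g) (hD : ∀ x, |g x| ≤ D) (c : ℝ) :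
    discSum γ ν (fun x => f x - c * g x) = discSum γ ν f - c * discSum γ ν g := by
  refine (((hasSum_discSum hγ0 hγ1 hC).sub ((hasSum_discSum hγ0 hγ1 hD).mul_left c)).congr_fun
    fun t => ?_).tsum_eq
  rw [integral_sub (integrable_of_abs_le hf hC) ((integrable_of_abs_le hg hD).const_mul c),
    integral_const_mul]
  ring

end DiscountedSum

section Simulation

variable {X : Type*} [MeasurableSpace X] {κ η : Kernel X X} [IsMarkovKernel κ]
  [IsMarkovKernel η] {γ : ℝ} {r u : X → ℝ} {C D : ℝ}

/-- By the Bellman equation the left-hand side is `|γ ∫ (κ V_κ - η V_κ) dν|`. -/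
lemma abs_integral_discVal_sub_le (ν : Measure X) [IsProbabilityMeasure ν] (hγ0 : 0 ≤ γ)
    (hγ1 : γ < 1) (hr : Measurable r) (hC : ∀ x, |r x| ≤ C) (hu : Measurable u)
    (hD : ∀ x, |u x| ≤ D)
    (hgap : ∀ x, |(∫ y, discVal κ γ r y ∂η x) - ∫ y, discVal κ γ r y ∂κ x| ≤ u x) :
    |(∫ x, discVal κ γ r x ∂ν) - γ * (∫ x, discVal κ γ r x ∂(η ∘ₘ ν)) - ∫ x, r x ∂ν|
      ≤ γ * ∫ x, u x ∂ν := by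
  set V := discVal κ γ r
  have hVm : Measurable V := measurable_discVal hγ0 hγ1 hr hC
  have hVb : ∀ x, |V x| ≤ C * (1 - γ)⁻¹ := abs_discVal_le hγ0 hγ1 hC
  have hκV : Integrable (fun x => ∫ y, V y ∂κ x) ν :=
    integrable_of_abs_le (by fun_prop) fun _ => abs_integral_le_of_abs_le hVb
  have hηV : Integrable (fun x => ∫ y, V y ∂η x) ν :=
    integrable_of_abs_le (by fun_prop) fun _ => abs_integral_le_of_abs_le hVb
  have hbellman : ∫ x, V x ∂ν = (∫ x, r x ∂ν) + γ * ∫ x, ∫ y, V y ∂κ x ∂ν := by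
    rw [integral_congr_ae (ae_of_all _ (discVal_eq_add_integral hγ0 hγ1 hr hC)),
      integral_add (integrable_of_abs_le hr hC) (hκV.const_mul γ), integral_const_mul]
  have hdefect : (∫ x, V x ∂ν) - γ * (∫ x, V x ∂(η ∘ₘ ν)) - ∫ x, r x ∂ν
      = γ * ∫ x, ((∫ y, V y ∂κ x) - ∫ y, V y ∂η x) ∂ν := by
    rw [hbellman, Measure.integral_bind (integrable_of_abs_le hVm hVb), integral_sub hκV hηV]
    ring
  rw [hdefect, abs_mul, abs_of_nonneg hγ0]
  refine mul_le_mul_of_nonneg_left ?_ hγ0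
  calc |∫ x, ((∫ y, V y ∂κ x) - ∫ y, V y ∂η x) ∂ν|
      ≤ ∫ x, |(∫ y, V y ∂κ x) - ∫ y, V y ∂η x| ∂ν := abs_integral_le_integral_abs
    _ ≤ ∫ x, u x ∂ν :=
      integral_mono (hκV.sub hηV).abs (integrable_of_abs_le hu hD) fun x =>
        abs_sub_comm (∫ y, V y ∂κ x) _ ▸ hgap x

lemma abs_discJ_sub_discSum_le (μ₀ : Measure X) [IsProbabilityMeasure μ₀] (hγ0 : 0 ≤ γ)
    (hγ1 : γ < 1) (hr : Measurable r) (hC : ∀ x, |r x| ≤ C) (hu : Measurable u)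
    (hD : ∀ x, |u x| ≤ D)
    (hgap : ∀ x, |(∫ y, discVal κ γ r y ∂η x) - ∫ y, discVal κ γ r y ∂κ x| ≤ u x) :
    |discJ κ γ r μ₀ - discSum γ (marginal η μ₀) r| ≤ γ * discSum γ (marginal η μ₀) u := by
  set b : ℕ → ℝ := fun t => ∫ x, discVal κ γ r x ∂marginal η μ₀ t
  have hb : ∀ t, |b t| ≤ C * (1 - γ)⁻¹ := fun t =>
    abs_integral_le_of_abs_le (abs_discVal_le hγ0 hγ1 hC)
  have hb0 : b 0 = discJ κ γ r μ₀ := by simp only [b, marginal_zero, discJ]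
  have hdefects := (hasSum_geometric_mul_sub_mul_succ hγ0 hγ1 hb).sub
    (hasSum_discSum (ν := marginal η μ₀) hγ0 hγ1 hC)
  rw [hb0] at hdefects
  refine hdefects.norm_le_of_bounded ((hasSum_discSum hγ0 hγ1 hD).mul_left γ) fun t => ?_
  have hstep := abs_integral_discVal_sub_le (marginal η μ₀ t) hγ0 hγ1 hr hC hu hD hgap
  rw [← marginal_succ] at hstep
  rw [Real.norm_eq_abs, ← mul_sub, abs_mul, abs_of_nonneg (pow_nonneg hγ0 t), mul_left_comm]
  exact mul_le_mul_of_nonneg_left hstep (pow_nonneg hγ0 t)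

end Simulation

lemma tendsto_of_pessimistic_surrogate {P : Type*} {J : P → ℝ} {tJ : ℕ → P → ℝ}
    {phat : ℕ → P} {pstar : P} {e : ℕ → ℝ} (hpess : ∀ n p, tJ n p ≤ J p)
    (hopt : ∀ n p, tJ n p ≤ tJ n (phat n)) (hstar : ∀ p, J p ≤ J pstar)
    (htight : ∀ n, J pstar ≤ tJ n pstar + e n) (he : Tendsto e atTop (nhds 0)) :
    Tendsto (fun n => J (phat n)) atTop (nhds (J pstar)) := by
  refine tendsto_of_tendsto_of_tendsto_of_le_of_le (g := fun n => J pstar - e n)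
    (by simpa using tendsto_const_nhds.sub he) tendsto_const_nhds (fun n => ?_)
    (fun n => hstar (phat n))
  linarith [htight n, hopt n pstar, hpess n (phat n)]

/-- **Asymptotic optimality of the Actor-Simulator** (deterministic skeleton of the paper's
Theorem 4): if at each iteration `n` the policy `phat n` maximizes the uncertainty-penalized
digital-twin objective `J̃ n p = Σ_t γ^t ∫ (r − λ·u n p) dμ^{η n p}_t` over policies, `pstar`
is optimal for the physical system, and the discounted uncertainty mass
`ε n = Σ_t γ^t ∫ u n pstar dμ^{η n pstar}_t` vanishes, then `J(κ (phat n)) → J(κ pstar)`. -/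
theorem stmt11 {X : Type*} [MeasurableSpace X]
    (γ : ℝ) (hγ0 : 0 ≤ γ) (hγ1 : γ < 1)
    (r : X → ℝ) (hr : Measurable r)
    (rmax : ℝ) (hr0 : ∀ x, 0 ≤ r x) (hrmax : ∀ x, r x ≤ rmax)
    (μ₀ : Measure X) [IsProbabilityMeasure μ₀]
    (lam : ℝ) (hlam : γ ≤ lam)
    {P : Type*} (κ : P → Kernel X X) (η : ℕ → P → Kernel X X)
    [∀ p, IsMarkovKernel (κ p)] [∀ n p, IsMarkovKernel (η n p)]
    (u : ℕ → P → X → ℝ) (hum : ∀ n p, Measurable (u n p))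
    (hub : ∀ n p, ∃ C, ∀ x, |u n p x| ≤ C) (hu0 : ∀ n p x, 0 ≤ u n p x)
    (hgap : ∀ n p x, |(∫ y, discVal (κ p) γ r y ∂(η n p x))
      - ∫ y, discVal (κ p) γ r y ∂(κ p x)| ≤ u n p x)
    (tJ : ℕ → P → ℝ)
    (htJ : ∀ n p, tJ n p
      = ∑' t : ℕ, γ ^ t * ∫ x, (r x - lam * u n p x) ∂(marginal (η n p) μ₀ t))
    (phat : ℕ → P) (hopt : ∀ n p, tJ n p ≤ tJ n (phat n))
    (pstar : P) (hstar : ∀ p, discJ (κ p) γ r μ₀ ≤ discJ (κ pstar) γ r μ₀)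
    (eps : ℕ → ℝ)
    (heps : ∀ n, eps n
      = ∑' t : ℕ, γ ^ t * ∫ x, u n pstar x ∂(marginal (η n pstar) μ₀ t))
    (heps0 : Tendsto eps atTop (nhds 0)) :
    Tendsto (fun n => discJ (κ (phat n)) γ r μ₀) atTop
      (nhds (discJ (κ pstar) γ r μ₀)) := by
  choose D hD using hub
  have hrb : ∀ x, |r x| ≤ rmax := fun x => abs_le.2 ⟨by linarith [hr0 x, hrmax x], hrmax x⟩
  set R := fun n p => discSum γ (marginal (η n p) μ₀) r
  set U := fun n p => discSum γ (marginal (η n p) μ₀) (u n p)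
  have hsplit : ∀ n p, tJ n p = R n p - lam * U n p := fun n p =>
    (htJ n p).trans (discSum_sub_const_mul hγ0 hγ1 hr hrb (hum n p) (hD n p) lam)
  have hsim : ∀ n p, |discJ (κ p) γ r μ₀ - R n p| ≤ γ * U n p := fun n p =>
    abs_discJ_sub_discSum_le μ₀ hγ0 hγ1 hr hrb (hum n p) (hD n p) (hgap n p)
  refine tendsto_of_pessimistic_surrogate (J := fun p => discJ (κ p) γ r μ₀)
    (e := fun n => (γ + lam) * eps n) (fun n p => ?_) hopt hstar (fun n => ?_)
    (by simpa using heps0.const_mul (γ + lam))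
  · have hU : 0 ≤ U n p := discSum_nonneg hγ0 (hu0 n p)
    linarith [(abs_le.1 (hsim n p)).1, hsplit n p, mul_le_mul_of_nonneg_right hlam hU]
  · rw [show eps n = U n pstar from heps n]
    linarith [(abs_le.1 (hsim n pstar)).2, hsplit n pstar]
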